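/- arXiv:1709.10455 — 5 statements merged into one kernel-verified Lean document; each statement's English description precedes it below -/
import Mathlib

section
/- Let q > 1 be a real number and let ι be a finite nonempty index set of machine groups, where group i has a positive real weight w i > 0 (its number of machines) and a speed s i > 0, and the speeds are pairwise distinct (s is injective). Let μ be a real number with 0 < μ ≤ 1, and let ψ, ξ : ι → ℝ be load profiles with ψ i ≥ 0 and ξ i ≥ 0 for all i. Assume: (1) for every i ∈ ι, ∑_{j : s j ≥ s i} ψ j * w j * s j ≥ ∑_{j : s j ≥ s i} ξ j * w j * s j (every prefix of groups in decreasing order of speeds carries at least as much volume under ψ as under ξ); and (2) for every pair i, j ∈ ι, (ξ i)^(q-1) / s i ≥ μ * (ξ j)^(q-1) / s j. Then ∑_i w i * (ψ i)^q ≥ μ^(q/(q-1)) * ∑_i w i * (ξ i)^q. -/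
/-!
Put `c := minᵢ ξ i ^ (q - 1) / s i` and `y i := (c * s i) ^ (1 / (q - 1))`. By the ratio
hypothesis, `μ * ξ i ^ (q - 1) ≤ c * s i ≤ ξ i ^ (q - 1)`, so `y ≤ ξ` pointwise and
`y i ^ q ≥ μ ^ (q / (q - 1)) * ξ i ^ q`. Since `y i ^ (q - 1)` is proportional to `s i`, the tangent
planes of `x ↦ x ^ q` at `y` sum to a multiple of the total volume `∑ x i * w i * s i`; as `ψ` has
at least the volume of `ξ` (the prefix of all groups), hence of `y`, convexity gives
`∑ w i * ψ i ^ q ≥ ∑ w i * y i ^ q`.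
-/

open Finset

namespace Real

/-- Tangent-line inequality for the convex function `x ↦ x ^ q`. -/
theorem rpow_add_mul_rpow_sub_one_mul_sub_le {a b q : ℝ} (ha : 0 ≤ a) (hb : 0 ≤ b) (hq : 1 < q) :
    b ^ q + q * b ^ (q - 1) * (a - b) ≤ a ^ q := by
  have hq1 : q - 1 ≠ 0 := by linarith
  have hyoung := young_inequality_of_nonneg ha (rpow_nonneg hb (q - 1))
    (HolderConjugate.conjExponent hq)
  have hpow : (b ^ (q - 1)) ^ conjExponent q = b ^ q := by
    rw [← rpow_mul hb, conjExponent]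
    congr 1
    field_simp [hq1]
  rw [hpow, conjExponent] at hyoung
  have hscaled : q * (a * b ^ (q - 1)) ≤ a ^ q + (q - 1) * b ^ q := by
    calc _ ≤ q * (a ^ q / q + b ^ q / (q / (q - 1))) := by gcongr
      _ = _ := by field_simp [hq1]
  have hb_mul : b ^ (q - 1) * b = b ^ q := by
    rw [← rpow_add_one' hb (by linarith), sub_add_cancel]
  linear_combination hscaled - q * hb_mul

theorem rpow_div_mul_rpow_le_rpow_inv_rpow {μ x a p r : ℝ} (hμ : 0 ≤ μ) (hx : 0 ≤ x)
    (hp : 0 < p) (hr : 0 ≤ r) (h : μ * x ^ p ≤ a) : μ ^ (r / p) * x ^ r ≤ (a ^ p⁻¹) ^ r := by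
  have ha : 0 ≤ a := le_trans (by positivity) h
  calc μ ^ (r / p) * x ^ r = (μ * x ^ p) ^ (r / p) := by
        rw [mul_rpow hμ (rpow_nonneg hx p), ← rpow_mul hx, mul_div_cancel₀ r hp.ne']
    _ ≤ a ^ (r / p) := rpow_le_rpow (by positivity) h (div_nonneg hr hp.le)
    _ = (a ^ p⁻¹) ^ r := by rw [← rpow_mul ha, inv_mul_eq_div]

end Real

open Real

theorem sum_mul_rpow_le_of_rpow_sub_one_eq_mul {ι : Type*} [Fintype ι] {q c : ℝ} (hq : 1 < q)
    (hc : 0 ≤ c) {w s y ψ : ι → ℝ} (hw : ∀ i, 0 ≤ w i) (hy : ∀ i, 0 ≤ y i)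
    (hψ : ∀ i, 0 ≤ ψ i) (hys : ∀ i, y i ^ (q - 1) = c * s i)
    (hvol : ∑ i, y i * w i * s i ≤ ∑ i, ψ i * w i * s i) :
    ∑ i, w i * y i ^ q ≤ ∑ i, w i * ψ i ^ q := by
  have htangent : ∀ i, w i * y i ^ q + q * c * (ψ i * w i * s i - y i * w i * s i) ≤
      w i * ψ i ^ q := by
    intro i
    have := mul_le_mul_of_nonneg_left
      (rpow_add_mul_rpow_sub_one_mul_sub_le (hψ i) (hy i) hq) (hw i)
    rw [hys i] at this
    linear_combination this
  have hsum := sum_le_sum fun i (_ : i ∈ univ) => htangent i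
  rw [sum_add_distrib, ← mul_sum, sum_sub_distrib] at hsum
  have : 0 ≤ q * c * (∑ i, ψ i * w i * s i - ∑ i, y i * w i * s i) :=
    mul_nonneg (by positivity) (sub_nonneg.2 hvol)
  linarith

theorem load_profile_comparison_general {ι : Type*} [Fintype ι] [Nonempty ι]
    (q : ℝ) (hq : 1 < q)
    (w s : ι → ℝ) (hw : ∀ i, 0 < w i) (hs : ∀ i, 0 < s i)
    (μ : ℝ) (hμ0 : 0 < μ)
    (ψ ξ : ι → ℝ) (hψ : ∀ i, 0 ≤ ψ i) (hξ : ∀ i, 0 ≤ ξ i)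
    (h1 : ∀ i : ι, ∑ j ∈ univ.filter (fun j => s i ≤ s j), ψ j * w j * s j ≥
        ∑ j ∈ univ.filter (fun j => s i ≤ s j), ξ j * w j * s j)
    (h2 : ∀ i j : ι, ξ i ^ (q - 1) / s i ≥ μ * (ξ j ^ (q - 1) / s j)) :
    ∑ i, w i * ψ i ^ q ≥ μ ^ (q / (q - 1)) * ∑ i, w i * ξ i ^ q := by
  have hp : 0 < q - 1 := by linarith
  obtain ⟨i₀, -, hi₀⟩ := exists_min_image univ s univ_nonempty
  have hvol := h1 i₀
  rw [filter_true_of_mem fun j _ => hi₀ j (mem_univ j)] at hvol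
  obtain ⟨i₁, -, hi₁⟩ := exists_min_image univ (fun i => ξ i ^ (q - 1) / s i) univ_nonempty
  set c := ξ i₁ ^ (q - 1) / s i₁
  have hc : 0 ≤ c := div_nonneg (rpow_nonneg (hξ i₁) _) (hs i₁).le
  have hc_le i : c * s i ≤ ξ i ^ (q - 1) := (le_div_iff₀ (hs i)).1 (hi₁ i (mem_univ i))
  have hc_ge i : μ * ξ i ^ (q - 1) ≤ c * s i := by
    have := h2 i₁ i
    rwa [ge_iff_le, ← mul_div_assoc, div_le_iff₀ (hs i)] at this
  set y := fun i => (c * s i) ^ (q - 1)⁻¹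
  have hcs i : 0 ≤ c * s i := mul_nonneg hc (hs i).le
  have hy_le i : y i ≤ ξ i := (rpow_inv_le_iff_of_pos (hcs i) (hξ i) hp).2 (hc_le i)
  have hy_vol : ∑ i, y i * w i * s i ≤ ∑ i, ξ i * w i * s i := by
    gcongr with i
    exacts [(hs i).le, (hw i).le, hy_le i]
  calc μ ^ (q / (q - 1)) * ∑ i, w i * ξ i ^ q = ∑ i, w i * (μ ^ (q / (q - 1)) * ξ i ^ q) := by
        rw [mul_sum]; congr! 1 with i; ring
    _ ≤ ∑ i, w i * y i ^ q := by
        gcongr with i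
        exacts [(hw i).le, rpow_div_mul_rpow_le_rpow_inv_rpow hμ0.le (hξ i) hp (by linarith)
          (hc_ge i)]
    _ ≤ ∑ i, w i * ψ i ^ q :=
        sum_mul_rpow_le_of_rpow_sub_one_eq_mul hq hc (fun i => (hw i).le)
          (fun i => rpow_nonneg (hcs i) _) hψ (fun i => rpow_inv_rpow (hcs i) hp.ne')
          (hy_vol.trans hvol)

theorem load_profile_comparison {ι : Type*} [Fintype ι] [Nonempty ι]
    (q : ℝ) (hq : 1 < q)
    (w s : ι → ℝ) (hw : ∀ i, 0 < w i) (hs : ∀ i, 0 < s i)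
    (hs_inj : Function.Injective s)
    (μ : ℝ) (hμ0 : 0 < μ) (hμ1 : μ ≤ 1)
    (ψ ξ : ι → ℝ) (hψ : ∀ i, 0 ≤ ψ i) (hξ : ∀ i, 0 ≤ ξ i)
    (h1 : ∀ i : ι, ∑ j ∈ univ.filter (fun j => s i ≤ s j), ψ j * w j * s j ≥
        ∑ j ∈ univ.filter (fun j => s i ≤ s j), ξ j * w j * s j)
    (h2 : ∀ i j : ι, ξ i ^ (q - 1) / s i ≥ μ * (ξ j ^ (q - 1) / s j)) :
    ∑ i, w i * ψ i ^ q ≥ μ ^ (q / (q - 1)) * ∑ i, w i * ξ i ^ q :=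
  load_profile_comparison_general q hq w s hw hs μ hμ0 ψ ξ hψ hξ h1 h2
end

section
/- Let q > 1 be a real number and let ι be a finite nonempty index set of machine groups, where group i has weight w i > 0 and speed s i > 0, and the speeds are pairwise distinct. Let ψ, ξ : ι → ℝ be load profiles with ψ i ≥ 0 and ξ i ≥ 0 for all i. Assume: (1) for every i ∈ ι, ∑_{j : s j ≥ s i} ψ j * w j * s j ≥ ∑_{j : s j ≥ s i} ξ j * w j * s j; and (2) the quantity (ξ i)^(q-1) / s i is monotone in speed: for all i, j with s i ≥ s j, (ξ i)^(q-1) / s i ≥ (ξ j)^(q-1) / s j. Then ∑_i w i * (ψ i)^q ≥ ∑_i w i * (ξ i)^q. -/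
/-!
Write `a i = (ψ i - ξ i) w i s i` and `c i = ξ i ^ (q - 1) / s i`. Hypothesis (1) says that every
upper tail (in the speed order) of `a` has nonnegative sum, and (2) says that `c` is monotone in
speed and nonnegative, so by Abel summation `∑ c i a i ≥ 0`. Since `c i a i = w i ξ i ^ (q - 1)
(ψ i - ξ i)`, the tangent line inequality `ξ ^ q + q ξ ^ (q - 1) (ψ - ξ) ≤ ψ ^ q` for the convex
function `t ↦ t ^ q`, weighted by `w i` and summed, gives the claim.
-/

open Finset

theorem Real.rpow_add_mul_rpow_sub_one_mul_sub_le_s1 {q x y : ℝ} (hq : 1 < q) (hx : 0 ≤ x)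
    (hy : 0 ≤ y) : y ^ q + q * y ^ (q - 1) * (x - y) ≤ x ^ q := by
  rcases hy.eq_or_lt with rfl | hy
  · rw [Real.zero_rpow (by linarith), Real.zero_rpow (by linarith)]
    simpa using Real.rpow_nonneg hx q
  -- Bernoulli's inequality applied to `x / y = 1 + (x / y - 1)`.
  have hbernoulli : 1 + q * (x / y - 1) ≤ (x / y) ^ q := by
    simpa using one_add_mul_self_le_rpow_one_add (s := x / y - 1)
      (by linarith [div_nonneg hx hy.le]) hq.le
  rw [Real.div_rpow hx hy.le, le_div_iff₀ (Real.rpow_pos_of_pos hy q)] at hbernoulli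
  calc y ^ q + q * y ^ (q - 1) * (x - y) = (1 + q * (x / y - 1)) * y ^ q := by
        rw [Real.rpow_sub hy, Real.rpow_one]
        field_simp
    _ ≤ x ^ q := hbernoulli

theorem Finset.sum_mul_nonneg_of_monotone_of_tail_sum_nonneg {ι α R : Type*} [LinearOrder α]
    [CommRing R] [PartialOrder R] [IsOrderedRing R] (s : ι → α) (T : Finset ι) {c a : ι → R}
    (hc : ∀ i ∈ T, 0 ≤ c i) (hmono : ∀ i ∈ T, ∀ j ∈ T, s i ≤ s j → c i ≤ c j)
    (ha : ∀ i ∈ T, 0 ≤ ∑ j ∈ T with s i ≤ s j, a j) :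
    0 ≤ ∑ i ∈ T, c i * a i := by
  induction T using Finset.strongInduction generalizing c with
  | H T ih =>
  rcases T.eq_empty_or_nonempty with rfl | hne
  · simp
  obtain ⟨i₀, hi₀, hmin⟩ := T.exists_min_image s hne
  -- Subtract the smallest weight `c i₀`; what is left vanishes outside the strict tail `T'`.
  set T' := {j ∈ T | s i₀ < s j}
  have hT' : T' ⊂ T := filter_ssubset.2 ⟨i₀, hi₀, lt_irrefl _⟩
  have htail : ∀ i ∈ T', {j ∈ T' | s i ≤ s j} = {j ∈ T | s i ≤ s j} := by
    intro i hi
    ext j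
    simp only [T', mem_filter]
    constructor
    · rintro ⟨⟨hj, -⟩, hij⟩; exact ⟨hj, hij⟩
    · rintro ⟨hj, hij⟩; exact ⟨⟨hj, (mem_filter.1 hi).2.trans_le hij⟩, hij⟩
  have hshift : ∑ i ∈ T, (c i - c i₀) * a i = ∑ i ∈ T', (c i - c i₀) * a i := by
    refine (sum_subset (filter_subset _ _) fun i hi hiT' => ?_).symm
    have hsi : s i = s i₀ :=
      le_antisymm (not_lt.1 fun h => hiT' (mem_filter.2 ⟨hi, h⟩)) (hmin i hi)
    rw [le_antisymm (hmono i hi i₀ hi₀ hsi.le) (hmono i₀ hi₀ i hi hsi.ge), sub_self, zero_mul]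
  have hrest : 0 ≤ ∑ i ∈ T', (c i - c i₀) * a i := by
    refine ih T' hT' (fun i hi => ?_) (fun i hi j hj hij => ?_) fun i hi => ?_
    · have hi := (mem_filter.1 hi).1
      exact sub_nonneg.2 (hmono i₀ hi₀ i hi (hmin i hi))
    · exact sub_le_sub_right (hmono i (mem_filter.1 hi).1 j (mem_filter.1 hj).1 hij) _
    · rw [htail i hi]; exact ha i (mem_filter.1 hi).1
  have hfirst : 0 ≤ c i₀ * ∑ i ∈ T, a i := by
    refine mul_nonneg (hc i₀ hi₀) ?_
    simpa [filter_true_of_mem fun j hj => hmin j hj] using ha i₀ hi₀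
  calc (0 : R) ≤ ∑ i ∈ T, (c i - c i₀) * a i + c i₀ * ∑ i ∈ T, a i := by
        rw [hshift]; exact add_nonneg hrest hfirst
    _ = ∑ i ∈ T, c i * a i := by
        rw [mul_sum, ← sum_add_distrib]
        exact sum_congr rfl fun i _ => by ring

theorem load_profile_comparison_mu_one_general {ι : Type*} [Fintype ι]
    (q : ℝ) (hq : 1 < q)
    (w s : ι → ℝ) (hw : ∀ i, 0 < w i) (hs : ∀ i, 0 < s i)
    (ψ ξ : ι → ℝ) (hψ : ∀ i, 0 ≤ ψ i) (hξ : ∀ i, 0 ≤ ξ i)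
    (h1 : ∀ i : ι, ∑ j ∈ univ.filter (fun j => s i ≤ s j), ψ j * w j * s j ≥
        ∑ j ∈ univ.filter (fun j => s i ≤ s j), ξ j * w j * s j)
    (h2 : ∀ i j : ι, s j ≤ s i → ξ i ^ (q - 1) / s i ≥ ξ j ^ (q - 1) / s j) :
    ∑ i, w i * ψ i ^ q ≥ ∑ i, w i * ξ i ^ q := by
  have hpair : 0 ≤ ∑ i, ξ i ^ (q - 1) / s i * ((ψ i - ξ i) * w i * s i) := by
    refine sum_mul_nonneg_of_monotone_of_tail_sum_nonneg s univ
      (fun i _ => div_nonneg (Real.rpow_nonneg (hξ i) _) (hs i).le)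
      (fun i _ j _ hij => h2 j i hij) fun i _ => ?_
    simpa only [sub_mul, sum_sub_distrib, sub_nonneg] using h1 i
  have hterm : ∀ i, w i * ξ i ^ q + q * (ξ i ^ (q - 1) / s i * ((ψ i - ξ i) * w i * s i)) ≤
      w i * ψ i ^ q := by
    intro i
    have htangent := Real.rpow_add_mul_rpow_sub_one_mul_sub_le_s1 hq (hψ i) (hξ i)
    calc w i * ξ i ^ q + q * (ξ i ^ (q - 1) / s i * ((ψ i - ξ i) * w i * s i))
        = w i * (ξ i ^ q + q * ξ i ^ (q - 1) * (ψ i - ξ i)) := by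
          field_simp [(hs i).ne']
      _ ≤ w i * ψ i ^ q := mul_le_mul_of_nonneg_left htangent (hw i).le
  calc ∑ i, w i * ξ i ^ q
      ≤ ∑ i, w i * ξ i ^ q + q * ∑ i, ξ i ^ (q - 1) / s i * ((ψ i - ξ i) * w i * s i) :=
        le_add_of_nonneg_right (mul_nonneg (by linarith) hpair)
    _ ≤ ∑ i, w i * ψ i ^ q := by
        rw [mul_sum, ← sum_add_distrib]; exact sum_le_sum fun i _ => hterm i

theorem load_profile_comparison_mu_one {ι : Type*} [Fintype ι] [Nonempty ι]
    (q : ℝ) (hq : 1 < q)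
    (w s : ι → ℝ) (hw : ∀ i, 0 < w i) (hs : ∀ i, 0 < s i)
    (hs_inj : Function.Injective s)
    (ψ ξ : ι → ℝ) (hψ : ∀ i, 0 ≤ ψ i) (hξ : ∀ i, 0 ≤ ξ i)
    (h1 : ∀ i : ι, ∑ j ∈ univ.filter (fun j => s i ≤ s j), ψ j * w j * s j ≥
        ∑ j ∈ univ.filter (fun j => s i ≤ s j), ξ j * w j * s j)
    (h2 : ∀ i j : ι, s j ≤ s i → ξ i ^ (q - 1) / s i ≥ ξ j ^ (q - 1) / s j) :
    ∑ i, w i * ψ i ^ q ≥ ∑ i, w i * ξ i ^ q :=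
  load_profile_comparison_mu_one_general q hq w s hw hs ψ ξ hψ hξ h1 h2
end

section
/- Let q > 1 be a real number, ι a finite nonempty index set of machine groups with speeds s i > 0, and let μ be a real number with 0 < μ ≤ 1. Let ξ : ι → ℝ be a load profile with ξ i ≥ 0 for all i, satisfying: for every pair i, j ∈ ι, (ξ i)^(q-1) / s i ≥ μ * (ξ j)^(q-1) / s j. Define χ : ι → ℝ by χ i = (s i * min_{j : s j ≥ s i} ((ξ j)^(q-1) / s j))^(1/(q-1)), where the minimum is over all groups at least as fast as i. Then for every i ∈ ι: (a) χ i ≤ ξ i; (b) χ i ≥ μ^(1/(q-1)) * ξ i; and (c) the ratios of χ are monotone in speed: for all i, j with s i ≥ s j, (χ i)^(q-1) / s i ≥ (χ j)^(q-1) / s j. -/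
open Finset

/-
Raising to the power `q - 1` and dividing by the speed turns `χ i` back into the minimum `m i` of
the ratios `ξ j ^ (q - 1) / s j` over the groups `j` at least as fast as `i`. Since `t ↦ t ^ (q - 1)`
is increasing on `[0, ∞)`, the three claims become statements about `m`: `m i ≤ ξ i ^ (q - 1) / s i`
because `i` is one of those groups, `μ · ξ i ^ (q - 1) / s i ≤ m i` because every ratio dominates
`μ` times every other, and `m` grows with speed because faster groups minimise over fewer groups.
-/

section InfOverFaster

variable {ι α β : Type*} [Fintype ι] [LinearOrder α] [Preorder β] [DecidableLE β]

-- Unfolds to the minimum written in `transformed_profile_properties`, so `hχ` applies to it as is.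
def infOverFaster (s : ι → β) (f : ι → α) (i : ι) : α :=
  (univ.filter (fun j => s i ≤ s j)).inf' ⟨i, mem_filter.mpr ⟨mem_univ i, le_refl _⟩⟩ f

theorem infOverFaster_le (s : ι → β) (f : ι → α) (i : ι) : infOverFaster s f i ≤ f i :=
  inf'_le f (mem_filter.mpr ⟨mem_univ i, le_refl (s i)⟩)

theorem le_infOverFaster_iff {s : ι → β} {f : ι → α} {i : ι} {c : α} :
    c ≤ infOverFaster s f i ↔ ∀ j, s i ≤ s j → c ≤ f j :=
  ⟨fun h j hj => h.trans (inf'_le f (mem_filter.mpr ⟨mem_univ j, hj⟩)),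
    fun h => le_inf' _ _ fun j hj => h j (mem_filter.mp hj).2⟩

theorem infOverFaster_mono {s : ι → β} (f : ι → α) {i j : ι} (h : s j ≤ s i) :
    infOverFaster s f j ≤ infOverFaster s f i :=
  le_infOverFaster_iff.mpr fun k hk => le_infOverFaster_iff.mp le_rfl k (h.trans hk)

end InfOverFaster

namespace Real

theorem mul_rpow_one_div_rpow_div {s m p : ℝ} (hs : 0 < s) (hm : 0 ≤ m) (hp : p ≠ 0) :
    ((s * m) ^ (1 / p)) ^ p / s = m := by
  rw [one_div, rpow_inv_rpow (mul_nonneg hs.le hm) hp, mul_div_cancel_left₀ _ hs.ne']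

theorem rpow_one_div_mul_rpow {μ x p : ℝ} (hμ : 0 ≤ μ) (hx : 0 ≤ x) (hp : p ≠ 0) :
    (μ ^ (1 / p) * x) ^ p = μ * x ^ p := by
  rw [mul_rpow (rpow_nonneg hμ _) hx, one_div, rpow_inv_rpow hμ hp]

theorem le_iff_rpow_div_le_rpow_div {x y p s : ℝ} (hx : 0 ≤ x) (hy : 0 ≤ y) (hp : 0 < p)
    (hs : 0 < s) : x ≤ y ↔ x ^ p / s ≤ y ^ p / s := by
  rw [div_le_div_iff_of_pos_right hs, rpow_le_rpow_iff hx hy hp]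

end Real

theorem transformed_profile_properties_general {ι : Type*} [Fintype ι]
    (q : ℝ) (hq : 1 < q)
    (s : ι → ℝ) (hs : ∀ i, 0 < s i)
    (μ : ℝ) (hμ0 : 0 < μ)
    (ξ : ι → ℝ) (hξ : ∀ i, 0 ≤ ξ i)
    (h2 : ∀ i j : ι, ξ i ^ (q - 1) / s i ≥ μ * (ξ j ^ (q - 1) / s j))
    (χ : ι → ℝ)
    (hχ : ∀ i, χ i = (s i * (univ.filter (fun j => s i ≤ s j)).inf'
        ⟨i, Finset.mem_filter.mpr ⟨Finset.mem_univ i, le_refl _⟩⟩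
        (fun j => ξ j ^ (q - 1) / s j)) ^ (1 / (q - 1))) :
    (∀ i, χ i ≤ ξ i) ∧
    (∀ i, χ i ≥ μ ^ (1 / (q - 1)) * ξ i) ∧
    (∀ i j, s j ≤ s i → χ i ^ (q - 1) / s i ≥ χ j ^ (q - 1) / s j) := by
  have hp : 0 < q - 1 := sub_pos.mpr hq
  set f : ι → ℝ := fun j => ξ j ^ (q - 1) / s j
  have hm : ∀ i, 0 ≤ infOverFaster s f i := fun i =>
    le_infOverFaster_iff.mpr fun j _ => div_nonneg (Real.rpow_nonneg (hξ j) _) (hs j).le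
  have hχ_nonneg : ∀ i, 0 ≤ χ i := fun i => by
    rw [hχ i]; exact Real.rpow_nonneg (mul_nonneg (hs i).le (hm i)) _
  have hratio : ∀ i, χ i ^ (q - 1) / s i = infOverFaster s f i := fun i => by
    rw [hχ i]; exact Real.mul_rpow_one_div_rpow_div (hs i) (hm i) hp.ne'
  refine ⟨fun i => ?_, fun i => ?_, fun i j hij => ?_⟩
  · rw [Real.le_iff_rpow_div_le_rpow_div (hχ_nonneg i) (hξ i) hp (hs i), hratio]
    exact infOverFaster_le s f i
  · have hlow : 0 ≤ μ ^ (1 / (q - 1)) * ξ i := mul_nonneg (Real.rpow_nonneg hμ0.le _) (hξ i)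
    rw [ge_iff_le, Real.le_iff_rpow_div_le_rpow_div hlow (hχ_nonneg i) hp (hs i), hratio,
      Real.rpow_one_div_mul_rpow hμ0.le (hξ i) hp.ne', mul_div_assoc, le_infOverFaster_iff]
    exact fun j _ => h2 j i
  · rw [ge_iff_le, hratio, hratio]
    exact infOverFaster_mono f hij

theorem transformed_profile_properties {ι : Type*} [Fintype ι] [Nonempty ι]
    (q : ℝ) (hq : 1 < q)
    (s : ι → ℝ) (hs : ∀ i, 0 < s i)
    (μ : ℝ) (hμ0 : 0 < μ) (hμ1 : μ ≤ 1)
    (ξ : ι → ℝ) (hξ : ∀ i, 0 ≤ ξ i)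
    (h2 : ∀ i j : ι, ξ i ^ (q - 1) / s i ≥ μ * (ξ j ^ (q - 1) / s j))
    (χ : ι → ℝ)
    (hχ : ∀ i, χ i = (s i * (univ.filter (fun j => s i ≤ s j)).inf'
        ⟨i, Finset.mem_filter.mpr ⟨Finset.mem_univ i, le_refl _⟩⟩
        (fun j => ξ j ^ (q - 1) / s j)) ^ (1 / (q - 1))) :
    (∀ i, χ i ≤ ξ i) ∧
    (∀ i, χ i ≥ μ ^ (1 / (q - 1)) * ξ i) ∧
    (∀ i j, s j ≤ s i → χ i ^ (q - 1) / s i ≥ χ j ^ (q - 1) / s j) :=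
  transformed_profile_properties_general q hq s hs μ hμ0 ξ hξ h2 χ hχ
end

section
/- Let q > 1 be a real number and set γ = q/(q-1). Let ι be a finite nonempty index set of (tied) machine groups, where group i has n i > 0 machines and speed s i > 0. Let Λ : ι → ℝ with Λ i ≥ 0 be current loads satisfying (Λ i)^(q-1) / s i = (Λ j)^(q-1) / s j for all i, j ∈ ι (i.e., the marginal values α are equal across the tied groups). Let p > 0 be the size of the current job and δ > 0 the fraction of the job being assigned, distributed in proportion to n i * (s i)^γ: group i receives x i = δ * n i * (s i)^γ / ∑_j n j * (s j)^γ, and its load becomes Λ' i = Λ i + x i * p / (n i * s i). Then the equality is preserved: (Λ' i)^(q-1) / s i = (Λ' j)^(q-1) / s j for all i, j ∈ ι. -/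
/-!
Equal marginal values mean `Λ i = c ^ (1/(q-1)) * s i ^ (1/(q-1))`, i.e. the loads are proportional
to `s i ^ (1/(q-1))`. Since `γ - 1 = 1/(q-1)`, the share of the job sent to group `i` raises its
load by `δ p / (∑ j, n j * s j ^ γ) * s i ^ (1/(q-1))`, again proportional to `s i ^ (1/(q-1))`.
So the new loads are `K * s i ^ (1/(q-1))` for a common `K ≥ 0`, and all marginal values become
`K ^ (q-1)`.
-/

open Finset

theorem Real.rpow_div_eq_rpow_of_eq_mul_rpow_inv {a K s r : ℝ} (hK : 0 ≤ K) (hs : 0 < s)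
    (hr : r ≠ 0) (h : a = K * s ^ r⁻¹) : a ^ r / s = K ^ r := by
  rw [h, Real.mul_rpow hK (Real.rpow_nonneg hs.le _), Real.rpow_inv_rpow hs.le hr,
    mul_div_cancel_right₀ _ hs.ne']

theorem Real.eq_mul_rpow_inv_of_rpow_div_eq {a c s r : ℝ} (ha : 0 ≤ a) (hs : 0 < s)
    (hr : r ≠ 0) (h : a ^ r / s = c) : a = c ^ r⁻¹ * s ^ r⁻¹ := by
  have hc : 0 ≤ c := h ▸ div_nonneg (Real.rpow_nonneg ha r) hs.le
  rw [← Real.mul_rpow hc hs.le, ← h, div_mul_cancel₀ _ hs.ne', Real.rpow_rpow_inv ha hr]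

theorem Real.mul_rpow_div_mul_div_eq {δ n s γ S p : ℝ} (hn : n ≠ 0) (hs : 0 < s) :
    δ * n * s ^ γ / S * p / (n * s) = δ * p / S * s ^ (γ - 1) := by
  rw [Real.rpow_sub_one hs.ne']
  field_simp

theorem tied_groups_stay_tied_general {ι : Type*} [Fintype ι]
    (q : ℝ) (hq : 1 < q) (γ : ℝ) (hγ : γ = q / (q - 1))
    (n s : ι → ℝ) (hn : ∀ i, 0 < n i) (hs : ∀ i, 0 < s i)
    (Λ : ι → ℝ) (hΛ : ∀ i, 0 ≤ Λ i)
    (htied : ∀ i j : ι, Λ i ^ (q - 1) / s i = Λ j ^ (q - 1) / s j)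
    (p δ : ℝ) (hp : 0 < p) (hδ : 0 < δ)
    (x Λ' : ι → ℝ)
    (hx : ∀ i, x i = δ * n i * s i ^ γ / ∑ j, n j * s j ^ γ)
    (hΛ' : ∀ i, Λ' i = Λ i + x i * p / (n i * s i)) :
    ∀ i j : ι, Λ' i ^ (q - 1) / s i = Λ' j ^ (q - 1) / s j := by
  intro i j
  have hq1 : q - 1 ≠ 0 := sub_ne_zero.mpr hq.ne'
  have hγ1 : γ - 1 = (q - 1)⁻¹ := by rw [hγ]; field_simp; ring
  set c := Λ i ^ (q - 1) / s i
  set S := ∑ j, n j * s j ^ γ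
  have hS : 0 ≤ S := sum_nonneg fun k _ => mul_nonneg (hn k).le (Real.rpow_nonneg (hs k).le γ)
  set K := c ^ (q - 1)⁻¹ + δ * p / S
  have hK : 0 ≤ K :=
    add_nonneg (Real.rpow_nonneg (div_nonneg (Real.rpow_nonneg (hΛ i) _) (hs i).le) _)
      (div_nonneg (mul_pos hδ hp).le hS)
  have hprofile : ∀ k, Λ' k = K * s k ^ (q - 1)⁻¹ := by
    intro k
    rw [hΛ' k, hx k, Real.mul_rpow_div_mul_div_eq (hn k).ne' (hs k), hγ1,
      Real.eq_mul_rpow_inv_of_rpow_div_eq (hΛ k) (hs k) hq1 (htied k i)]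
    ring
  rw [Real.rpow_div_eq_rpow_of_eq_mul_rpow_inv hK (hs i) hq1 (hprofile i),
    Real.rpow_div_eq_rpow_of_eq_mul_rpow_inv hK (hs j) hq1 (hprofile j)]

theorem tied_groups_stay_tied {ι : Type*} [Fintype ι] [Nonempty ι]
    (q : ℝ) (hq : 1 < q) (γ : ℝ) (hγ : γ = q / (q - 1))
    (n s : ι → ℝ) (hn : ∀ i, 0 < n i) (hs : ∀ i, 0 < s i)
    (Λ : ι → ℝ) (hΛ : ∀ i, 0 ≤ Λ i)
    (htied : ∀ i j : ι, Λ i ^ (q - 1) / s i = Λ j ^ (q - 1) / s j)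
    (p δ : ℝ) (hp : 0 < p) (hδ : 0 < δ)
    (x Λ' : ι → ℝ)
    (hx : ∀ i, x i = δ * n i * s i ^ γ / ∑ j, n j * s j ^ γ)
    (hΛ' : ∀ i, Λ' i = Λ i + x i * p / (n i * s i)) :
    ∀ i j : ι, Λ' i ^ (q - 1) / s i = Λ' j ^ (q - 1) / s j :=
  tied_groups_stay_tied_general q hq γ hγ n s hn hs Λ hΛ htied p δ hp hδ x Λ' hx hΛ'
end

section
/- Let ι be a finite index set of machine groups with weights w i > 0 and pairwise distinct speeds s i > 0, and let ψ, χ : ι → ℝ be load profiles with ψ i ≥ 0 and χ i ≥ 0 for all i. Assume the prefix condition: for every i ∈ ι, ∑_{j : s j ≥ s i} ψ j * w j * s j ≥ ∑_{j : s j ≥ s i} χ j * w j * s j. Suppose i₀ ∈ ι is the slowest group with ψ i₀ < χ i₀, i.e., ψ i₀ < χ i₀ and ψ j ≥ χ j for every j with s j < s i₀. Then there exists a group i' with s i' > s i₀ such that ψ i' > χ i' and, for every prefix P = {j : s j ≥ s k} (for some k ∈ ι) with i' ∈ P and i₀ ∉ P, the strict inequality ∑_{j ∈ P} ψ j * w j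 * s j > ∑_{j ∈ P} χ j * w j * s j holds. -/
/-!
Write `d j = (ψ j - χ j) w j s j`, so every prefix sum of `d` is nonnegative and `d i₀ < 0`.
Since the prefix of `i₀` has a nonnegative sum, some strictly faster group `i'` has `d i' > 0`;
take the slowest such. A prefix `P` containing `i'` but not `i₀` misses exactly `i₀` and groups
strictly between `i₀` and `P` in speed, none of which has `d > 0`. So the prefix of `i₀` exceeds
`P` by a negative amount, and the sum over `P` is positive.
-/

open Finset

section PrefixSums

variable {ι α : Type*} [Fintype ι] [LinearOrder α] {s : ι → α} {d : ι → ℝ} {i₀ : ι}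

theorem exists_slowest_faster_pos (hs : Function.Injective s)
    (hpre : 0 ≤ ∑ j ∈ univ.filter (fun j => s i₀ ≤ s j), d j) (hi₀ : d i₀ < 0) :
    ∃ i', s i₀ < s i' ∧ 0 < d i' ∧ ∀ j, s i₀ < s j → s j < s i' → d j ≤ 0 := by
  classical
  set T := univ.filter (fun j => s i₀ < s j ∧ 0 < d j)
  have hT : T.Nonempty := by
    by_contra hT
    have hnonpos : ∀ j ∈ univ.filter (fun j => s i₀ ≤ s j), d j ≤ 0 := by
      intro j hj
      rcases (mem_filter.mp hj).2.lt_or_eq with hlt | heq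
      · by_contra hpos
        exact hT ⟨j, mem_filter.mpr ⟨mem_univ j, hlt, not_le.mp hpos⟩⟩
      · exact hs heq ▸ hi₀.le
    have := sum_neg' hnonpos ⟨i₀, by simp, hi₀⟩
    linarith
  obtain ⟨i', hi'T, hmin⟩ := T.exists_min_image s hT
  obtain ⟨hi'fast, hi'pos⟩ := (mem_filter.mp hi'T).2
  refine ⟨i', hi'fast, hi'pos, fun j hj hji' => ?_⟩
  by_contra hpos
  exact (hmin j (mem_filter.mpr ⟨mem_univ j, hj, not_le.mp hpos⟩)).not_gt hji'

theorem exists_faster_pos_with_pos_prefix_sums (hs : Function.Injective s)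
    (hpre : ∀ i, 0 ≤ ∑ j ∈ univ.filter (fun j => s i ≤ s j), d j) (hi₀ : d i₀ < 0) :
    ∃ i', s i₀ < s i' ∧ 0 < d i' ∧ ∀ k, s k ≤ s i' → s i₀ < s k →
      0 < ∑ j ∈ univ.filter (fun j => s k ≤ s j), d j := by
  classical
  obtain ⟨i', hi'fast, hi'pos, hbetween⟩ := exists_slowest_faster_pos hs (hpre i₀) hi₀
  refine ⟨i', hi'fast, hi'pos, fun k hki' hi₀k => ?_⟩
  have hsplit := sum_filter_add_sum_filter_not (univ.filter (fun j => s i₀ ≤ s j))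
    (fun j => s k ≤ s j) d
  have hupper : (univ.filter (fun j => s i₀ ≤ s j)).filter (fun j => s k ≤ s j) =
      univ.filter (fun j => s k ≤ s j) := by
    rw [filter_filter]
    exact filter_congr fun j _ => ⟨And.right, fun hkj => ⟨(hi₀k.trans_le hkj).le, hkj⟩⟩
  have hlower :
      ∑ j ∈ (univ.filter (fun j => s i₀ ≤ s j)).filter (fun j => ¬s k ≤ s j), d j < 0 := by
    refine sum_neg' (fun j hj => ?_) ⟨i₀, by simp [hi₀k], hi₀⟩
    simp only [mem_filter, mem_univ, true_and, not_le] at hj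
    rcases hj.1.lt_or_eq with hlt | heq
    · exact hbetween j hlt (hj.2.trans_le hki')
    · exact hs heq ▸ hi₀.le
  rw [hupper] at hsplit
  linarith [hpre i₀]

end PrefixSums

theorem exists_overloaded_faster_group_general {ι : Type*} [Fintype ι]
    (w s : ι → ℝ) (hw : ∀ i, 0 < w i) (hs : ∀ i, 0 < s i)
    (hs_inj : Function.Injective s)
    (ψ χ : ι → ℝ)
    (hpre : ∀ i : ι, ∑ j ∈ univ.filter (fun j => s i ≤ s j), ψ j * w j * s j ≥
        ∑ j ∈ univ.filter (fun j => s i ≤ s j), χ j * w j * s j)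
    (i₀ : ι) (hi₀ : ψ i₀ < χ i₀) :
    ∃ i', s i₀ < s i' ∧ χ i' < ψ i' ∧
      ∀ k : ι, i' ∈ univ.filter (fun j => s k ≤ s j) →
        i₀ ∉ univ.filter (fun j => s k ≤ s j) →
        ∑ j ∈ univ.filter (fun j => s k ≤ s j), ψ j * w j * s j >
        ∑ j ∈ univ.filter (fun j => s k ≤ s j), χ j * w j * s j := by
  set d : ι → ℝ := fun j => ψ j * w j * s j - χ j * w j * s j
  have hd_pos : ∀ j, 0 < d j ↔ χ j < ψ j := fun j => by
    simp only [d, sub_pos, mul_assoc]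
    exact mul_lt_mul_iff_left₀ (mul_pos (hw j) (hs j))
  have hd_neg : d i₀ < 0 := by
    simpa only [d, sub_neg, mul_assoc] using
      mul_lt_mul_of_pos_right hi₀ (mul_pos (hw i₀) (hs i₀))
  obtain ⟨i', hi'fast, hi'pos, hprefix⟩ := exists_faster_pos_with_pos_prefix_sums hs_inj
    (fun i => by simpa only [d, sum_sub_distrib, sub_nonneg] using hpre i) hd_neg
  refine ⟨i', hi'fast, (hd_pos i').mp hi'pos, fun k hi'k hi₀k => ?_⟩
  simp only [mem_filter, mem_univ, true_and, not_le] at hi'k hi₀k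
  simpa only [d, sum_sub_distrib, sub_pos] using hprefix k hi'k hi₀k

theorem exists_overloaded_faster_group {ι : Type*} [Fintype ι]
    (w s : ι → ℝ) (hw : ∀ i, 0 < w i) (hs : ∀ i, 0 < s i)
    (hs_inj : Function.Injective s)
    (ψ χ : ι → ℝ) (hψ : ∀ i, 0 ≤ ψ i) (hχ : ∀ i, 0 ≤ χ i)
    (hpre : ∀ i : ι, ∑ j ∈ univ.filter (fun j => s i ≤ s j), ψ j * w j * s j ≥
        ∑ j ∈ univ.filter (fun j => s i ≤ s j), χ j * w j * s j)
    (i₀ : ι) (hi₀ : ψ i₀ < χ i₀)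
    (hslowest : ∀ j, s j < s i₀ → χ j ≤ ψ j) :
    ∃ i', s i₀ < s i' ∧ χ i' < ψ i' ∧
      ∀ k : ι, i' ∈ univ.filter (fun j => s k ≤ s j) →
        i₀ ∉ univ.filter (fun j => s k ≤ s j) →
        ∑ j ∈ univ.filter (fun j => s k ≤ s j), ψ j * w j * s j >
        ∑ j ∈ univ.filter (fun j => s k ≤ s j), χ j * w j * s j :=
  exists_overloaded_faster_group_general w s hw hs hs_inj ψ χ hpre i₀ hi₀
end
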